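/- arXiv:2207.12682 — 2 statements merged into one kernel-verified Lean document; each statement's English description precedes it below -/
import Mathlib

section
/- For every real $r$, every $k > 0$, and every $p \ge 2$, let $j_{k,p}(r) = \int_0^r s\,|T_k(s)|^{p-2}\, ds$, where $T_k(s) = \max(-k, \min(k, s))$ is the truncation at level $k$. Then $r^2 |T_k(r)|^{p-2} \le p\, j_{k,p}(r)$. -/
/-!
On `[0, k]` the integrand is `s ^ (p - 1)`, so `p * j(r) = r ^ p` and the bound is an equality.
Beyond `k` the integrand is `k ^ (p - 2) * s`, so
`p * j(r) = k ^ p + p / 2 * (r ^ 2 - k ^ 2) * k ^ (p - 2) ≥ r ^ 2 * k ^ (p - 2)` since `p ≥ 2`.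
Negative `r` reduce to positive ones: the integrand is odd, so `j` is even.
-/

open Set intervalIntegral
open scoped Interval

theorem Function.Odd.integral_zero_neg {E : Type*} [NormedAddCommGroup E] [NormedSpace ℝ E]
    {f : ℝ → E} (hf : f.Odd) (r : ℝ) :
    ∫ x in (0:ℝ)..-r, f x = ∫ x in (0:ℝ)..r, f x := by
  have h := integral_comp_neg (a := 0) (b := r) f
  simp only [hf _, integral_neg, neg_zero] at h
  rw [integral_symm, ← h, neg_neg]

def truncation (k s : ℝ) : ℝ := max (-k) (min k s)

section truncation

variable {k : ℝ}

theorem truncation_neg (hk : 0 ≤ k) (s : ℝ) : truncation k (-s) = -truncation k s := by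
  simp only [truncation, max_def, min_def]
  split_ifs <;> linarith

theorem abs_truncation_of_nonneg (hk : 0 ≤ k) {s : ℝ} (hs : 0 ≤ s) :
    |truncation k s| = min k s := by
  rw [truncation, max_eq_right (le_min (by linarith) (by linarith)),
    abs_of_nonneg (le_min hk hs)]

variable {p : ℝ}

theorem odd_mul_abs_truncation_rpow (hk : 0 ≤ k) :
    (fun s ↦ s * |truncation k s| ^ (p - 2)).Odd := by
  intro s
  simp only [truncation_neg hk, abs_neg, neg_mul]

theorem mul_abs_truncation_rpow_eqOn_Ioc (hk : 0 ≤ k) :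
    EqOn (fun s ↦ s * |truncation k s| ^ (p - 2)) (fun s ↦ s ^ (p - 1)) (Ioc 0 k) := by
  rintro s ⟨hs, hsk⟩
  simp only [abs_truncation_of_nonneg hk hs.le, min_eq_right hsk]
  rw [show p - 1 = 1 + (p - 2) by ring, Real.rpow_add hs, Real.rpow_one]

theorem mul_abs_truncation_rpow_eqOn_Ici (hk : 0 ≤ k) :
    EqOn (fun s ↦ s * |truncation k s| ^ (p - 2)) (fun s ↦ s * k ^ (p - 2)) (Ici k) := by
  intro s (hs : k ≤ s)
  simp only [abs_truncation_of_nonneg hk (hk.trans hs), min_eq_left hs]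

theorem mul_integral_mul_abs_truncation_rpow_of_le (hp : 0 < p) {r : ℝ} (hr : 0 ≤ r)
    (hrk : r ≤ k) : p * ∫ s in (0:ℝ)..r, s * |truncation k s| ^ (p - 2) = r ^ p := by
  have hEqOn : EqOn (fun s ↦ s * |truncation k s| ^ (p - 2)) (fun s ↦ s ^ (p - 1)) (Ι 0 r) :=
    fun s hs ↦ mul_abs_truncation_rpow_eqOn_Ioc (hr.trans hrk)
      (Ioc_subset_Ioc_right hrk (uIoc_of_le hr ▸ hs))
  rw [integral_congr_ae (Filter.Eventually.of_forall hEqOn),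
    integral_rpow (Or.inl (by linarith)), sub_add_cancel, Real.zero_rpow hp.ne', sub_zero,
    mul_div_cancel₀ _ hp.ne']

theorem mul_integral_mul_abs_truncation_rpow_of_ge (hp : 0 < p) (hk : 0 ≤ k) {r : ℝ}
    (hkr : k ≤ r) : p * ∫ s in (0:ℝ)..r, s * |truncation k s| ^ (p - 2)
      = k ^ p + p * ((r ^ 2 - k ^ 2) / 2 * k ^ (p - 2)) := by
  have hIoc := mul_abs_truncation_rpow_eqOn_Ioc (p := p) hk
  have hIci := mul_abs_truncation_rpow_eqOn_Ici (p := p) hk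
  have hint₁ : IntervalIntegrable (fun s ↦ s * |truncation k s| ^ (p - 2))
      MeasureTheory.volume 0 k :=
    (intervalIntegrable_rpow' (by linarith)).congr (uIoc_of_le hk ▸ hIoc).symm
  have hint₂ : IntervalIntegrable (fun s ↦ s * |truncation k s| ^ (p - 2))
      MeasureTheory.volume k r :=
    (continuous_id.mul continuous_const).intervalIntegrable k r |>.congr
      fun s hs ↦ (hIci (uIoc_of_le hkr ▸ hs).1.le).symm
  rw [← integral_add_adjacent_intervals hint₁ hint₂, mul_add,
    mul_integral_mul_abs_truncation_rpow_of_le hp hk le_rfl,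
    integral_congr (hIci.mono (uIcc_of_le hkr ▸ Icc_subset_Ici_self)), integral_mul_const,
    integral_id]

theorem sq_mul_abs_truncation_rpow_le_of_nonneg (hk : 0 ≤ k) (hp : 2 ≤ p) {r : ℝ}
    (hr : 0 ≤ r) : r ^ 2 * |truncation k r| ^ (p - 2)
      ≤ p * ∫ s in (0:ℝ)..r, s * |truncation k s| ^ (p - 2) := by
  have hp0 : ((2 : ℕ) : ℝ) + (p - 2) ≠ 0 := by push_cast; linarith
  rcases le_total r k with hrk | hkr
  · rw [mul_integral_mul_abs_truncation_rpow_of_le (by linarith) hr hrk,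
      abs_truncation_of_nonneg hk hr, min_eq_right hrk, ← Real.rpow_natCast,
      ← Real.rpow_add' hr hp0]
    norm_num
  · rw [mul_integral_mul_abs_truncation_rpow_of_ge (by linarith) hk hkr,
      abs_truncation_of_nonneg hk hr, min_eq_left hkr]
    have hkp : k ^ p = k ^ 2 * k ^ (p - 2) := by
      rw [← Real.rpow_natCast, ← Real.rpow_add' hk hp0]
      norm_num
    have hgap : 0 ≤ (r ^ 2 - k ^ 2) * k ^ (p - 2) :=
      mul_nonneg (sub_nonneg.mpr (pow_le_pow_left₀ hk hkr 2)) (by positivity)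
    nlinarith

end truncation

/-- For `r ∈ ℝ`, `k > 0`, `p ≥ 2`, with `T_k` the truncation at level `k`
and `j_{k,p}(r) = ∫₀ʳ s |T_k(s)|^{p-2} ds`, one has `r² |T_k(r)|^{p-2} ≤ p · j_{k,p}(r)`. -/
theorem truncation_primitive_bound (r k p : ℝ) (hk : 0 < k) (hp : 2 ≤ p) :
    r ^ 2 * |max (-k) (min k r)| ^ (p - 2)
      ≤ p * ∫ s in (0:ℝ)..r, s * |max (-k) (min k s)| ^ (p - 2) := by
  rcases le_total 0 r with hr | hr
  · exact sq_mul_abs_truncation_rpow_le_of_nonneg hk.le hp hr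
  · have h := sq_mul_abs_truncation_rpow_le_of_nonneg hk.le hp (neg_nonneg.mpr hr)
    rwa [neg_sq, truncation_neg hk.le, abs_neg,
      (odd_mul_abs_truncation_rpow hk.le).integral_zero_neg] at h
end

section
/- Let $[X,\mathcal{B},m,\nu]$ be a reversible random walk space with $\nu(X) < \infty$ satisfying the Poincaré inequality $\lambda \|f\|^2_{L^2(X,\nu)} \le \mathcal{H}_m(f)$ for all $f \in L^2(X,\nu)$ with $\int_X f\,d\nu = 0$, where $\lambda > 0$. Suppose $v \in L_0^2(X,\nu)$ and $\phi \in L_0^2(X,\nu)\cap L^1(X,\nu)$ satisfy $\Delta_m \phi = v$. Then $\|\phi\|^2_{L^2(X,\nu)} \le \tfrac{1}{2\lambda} \|v\|^2_{H^{-1}_m}$ and $\|v\|_{L^2(X,\nu)} \le \sqrt{2/\lambda}\, \|v\|_{H^{-1}_m}$, where $\|v\|^2_{H^{-1}_m} := \tfrac{1}{2}\int_{X\times X} (\phi(y)-\phi(x))^2\, dm_x(y)\, d\nu(x)$. -/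
/-!
Poincaré's inequality gives `λ ‖φ‖² ≤ E / 4`, where `E = ∫∫ (φ(y) - φ(x))² dm_x(y) dν(x)`.
Jensen's inequality for each probability measure `m_x` gives
`v(x)² = (∫ (φ(y) - φ(x)) dm_x(y))² ≤ ∫ (φ(y) - φ(x))² dm_x(y)`, so `‖v‖² ≤ E`.
Since both marginals of `ν ⊗ m` are `ν` (invariance), `E ≤ 4 ‖φ‖²`; together with Poincaré
this forces `λ E ≤ E`, whence `‖v‖² ≤ E ≤ E / λ`.
-/

open MeasureTheory ProbabilityTheory
open scoped ENNReal

lemma sq_integral_le_integral_sq {Ω : Type*} [MeasurableSpace Ω] {μ : Measure Ω}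
    [IsProbabilityMeasure μ] {g : Ω → ℝ} (hg : MemLp g 2 μ) :
    (∫ ω, g ω ∂μ) ^ 2 ≤ ∫ ω, g ω ^ 2 ∂μ := by
  have h := variance_nonneg g μ
  rw [variance_eq_sub hg] at h
  simpa only [Pi.pow_apply, sub_nonneg] using h

section InvariantKernel

variable {X : Type*} [MeasurableSpace X] {m : Kernel X X} [IsMarkovKernel m]
  {ν : Measure X} [SFinite ν] {f : X → ℝ}

lemma map_fst_compProd : (ν.compProd m).map Prod.fst = ν :=
  Measure.fst_compProd ν m

lemma map_snd_compProd_of_bind_eq (hinv : ν.bind (fun x => m x) = ν) :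
    (ν.compProd m).map Prod.snd = ν :=
  (Measure.snd_compProd ν m).trans hinv

lemma integral_comp_fst_compProd (hf : AEStronglyMeasurable f ν) :
    ∫ q, f q.1 ∂(ν.compProd m) = ∫ x, f x ∂ν := by
  rw [← integral_map measurable_fst.aemeasurable (by rwa [map_fst_compProd]),
    map_fst_compProd]

lemma integral_comp_snd_compProd (hinv : ν.bind (fun x => m x) = ν)
    (hf : AEStronglyMeasurable f ν) :
    ∫ q, f q.2 ∂(ν.compProd m) = ∫ x, f x ∂ν := by
  rw [← integral_map measurable_snd.aemeasurable (by rwa [map_snd_compProd_of_bind_eq hinv]),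
    map_snd_compProd_of_bind_eq hinv]

lemma MeasureTheory.MemLp.comp_fst_compProd {p : ℝ≥0∞} (hf : MemLp f p ν) :
    MemLp (fun q => f q.1) p (ν.compProd m) :=
  MemLp.comp_of_map (by rwa [map_fst_compProd]) measurable_fst.aemeasurable

lemma MeasureTheory.MemLp.comp_snd_compProd {p : ℝ≥0∞} (hinv : ν.bind (fun x => m x) = ν)
    (hf : MemLp f p ν) :
    MemLp (fun q => f q.2) p (ν.compProd m) :=
  MemLp.comp_of_map (by rwa [map_snd_compProd_of_bind_eq hinv]) measurable_snd.aemeasurable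

lemma MeasureTheory.MemLp.increment_compProd {p : ℝ≥0∞}
    (hinv : ν.bind (fun x => m x) = ν) (hf : MemLp f p ν) :
    MemLp (fun q : X × X => f q.2 - f q.1) p (ν.compProd m) :=
  (hf.comp_snd_compProd hinv).sub hf.comp_fst_compProd

lemma integral_sq_increment_le (hinv : ν.bind (fun x => m x) = ν) (hf : MemLp f 2 ν) :
    ∫ q, (f q.2 - f q.1) ^ 2 ∂(ν.compProd m) ≤ 4 * ∫ x, f x ^ 2 ∂ν := by
  have h2 := (hf.comp_snd_compProd hinv).integrable_sq
  have h1 := (hf.comp_fst_compProd (m := m)).integrable_sq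
  have hsq := hf.integrable_sq.aestronglyMeasurable
  calc ∫ q, (f q.2 - f q.1) ^ 2 ∂(ν.compProd m)
      ≤ ∫ q, (2 * f q.2 ^ 2 + 2 * f q.1 ^ 2) ∂(ν.compProd m) := by
        refine integral_mono (hf.increment_compProd hinv).integrable_sq
          ((h2.const_mul 2).add (h1.const_mul 2)) fun q => ?_
        nlinarith [sq_nonneg (f q.2 + f q.1)]
    _ = 4 * ∫ x, f x ^ 2 ∂ν := by
        rw [integral_add (h2.const_mul 2) (h1.const_mul 2), integral_const_mul,
          integral_const_mul, integral_comp_snd_compProd hinv hsq, integral_comp_fst_compProd hsq]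
        ring

lemma integral_sq_integral_increment_le (hinv : ν.bind (fun x => m x) = ν)
    (hf : MemLp f 2 ν) :
    ∫ x, (∫ y, (f y - f x) ∂m x) ^ 2 ∂ν ≤ ∫ q, (f q.2 - f q.1) ^ 2 ∂(ν.compProd m) := by
  have hinc := hf.increment_compProd hinv
  have hint := hinc.integrable_sq
  rw [Measure.integral_compProd hint]
  refine integral_mono_of_nonneg (.of_forall fun x => sq_nonneg _) hint.integral_compProd ?_
  filter_upwards [AEStronglyMeasurable.ae_of_compProd (f := fun x y => f y - f x) hinc.1,
    ((Measure.integrable_compProd_iff hint.1).mp hint).1] with x hmeas hsq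
  exact sq_integral_le_integral_sq ((memLp_two_iff_integrable_sq hmeas).2 hsq)

end InvariantKernel

theorem H_minus_one_estimates_general
    {X : Type*} [MeasurableSpace X] (m : Kernel X X) [IsMarkovKernel m]
    (ν : Measure X) [IsFiniteMeasure ν]
    (hinv : ν.bind (fun x => m x) = ν)
    (lam : ℝ) (hlam : 0 < lam)
    (hP : ∀ f : X → ℝ, MemLp f 2 ν → (∫ x, f x ∂ν) = 0 →
      lam * ∫ x, (f x)^2 ∂ν ≤ (1/4) * ∫ p, (f p.2 - f p.1)^2 ∂(ν.compProd m))
    (v φ : X → ℝ)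
    (hφ2 : MemLp φ 2 ν) (hφ0 : (∫ x, φ x ∂ν) = 0)
    (heq : ∀ x, (∫ y, (φ y - φ x) ∂(m x)) = v x) :
    (∫ x, (φ x)^2 ∂ν) ≤ (1/(2*lam)) * ((1/2) * ∫ p, (φ p.2 - φ p.1)^2 ∂(ν.compProd m)) ∧
      Real.sqrt (∫ x, (v x)^2 ∂ν)
        ≤ Real.sqrt (2/lam) *
            Real.sqrt ((1/2) * ∫ p, (φ p.2 - φ p.1)^2 ∂(ν.compProd m)) := by
  set E := ∫ p, (φ p.2 - φ p.1) ^ 2 ∂(ν.compProd m)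
  have hpoincare := hP φ hφ2 hφ0
  have hE_le : E ≤ 4 * ∫ x, φ x ^ 2 ∂ν := integral_sq_increment_le hinv hφ2
  have hv_le : ∫ x, v x ^ 2 ∂ν ≤ E := by
    simpa only [heq] using integral_sq_integral_increment_le hinv hφ2
  have hv_nonneg : 0 ≤ ∫ x, v x ^ 2 ∂ν := integral_nonneg fun x => sq_nonneg _
  constructor
  · rw [show 1 / (2 * lam) * (1 / 2 * E) = E / (4 * lam) by ring, le_div_iff₀ (by positivity)]
    linarith
  · rw [← Real.sqrt_mul (by positivity), show 2 / lam * (1 / 2 * E) = E / lam by field_simp]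
    refine Real.sqrt_le_sqrt ((le_div_iff₀ hlam).2 ?_)
    nlinarith

/-- In a reversible random walk space with finite measure satisfying a
Poincaré inequality with constant `lam > 0`, if `v ∈ L²₀(X,ν)` and
`φ ∈ L²₀(X,ν) ∩ L¹(X,ν)` satisfy `Δ_m φ = v`, then
`‖φ‖₂² ≤ (1/(2 lam)) ‖v‖²_{H⁻¹}` and `‖v‖₂ ≤ √(2/lam) ‖v‖_{H⁻¹}`, where
`‖v‖²_{H⁻¹} = ½ ∫∫ (φ(y)-φ(x))² dm_x(y) dν(x)`. -/
theorem H_minus_one_estimates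
    {X : Type*} [MeasurableSpace X] (m : Kernel X X) [IsMarkovKernel m]
    (ν : Measure X) [IsFiniteMeasure ν]
    (hinv : ν.bind (fun x => m x) = ν)
    (hrev : (ν.compProd m).map Prod.swap = ν.compProd m)
    (lam : ℝ) (hlam : 0 < lam)
    (hP : ∀ f : X → ℝ, MemLp f 2 ν → (∫ x, f x ∂ν) = 0 →
      lam * ∫ x, (f x)^2 ∂ν ≤ (1/4) * ∫ p, (f p.2 - f p.1)^2 ∂(ν.compProd m))
    (v φ : X → ℝ)
    (hv : MemLp v 2 ν) (hv0 : (∫ x, v x ∂ν) = 0)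
    (hφ1 : Integrable φ ν) (hφ2 : MemLp φ 2 ν) (hφ0 : (∫ x, φ x ∂ν) = 0)
    (heq : ∀ x, (∫ y, (φ y - φ x) ∂(m x)) = v x) :
    (∫ x, (φ x)^2 ∂ν) ≤ (1/(2*lam)) * ((1/2) * ∫ p, (φ p.2 - φ p.1)^2 ∂(ν.compProd m)) ∧
      Real.sqrt (∫ x, (v x)^2 ∂ν)
        ≤ Real.sqrt (2/lam) *
            Real.sqrt ((1/2) * ∫ p, (φ p.2 - φ p.1)^2 ∂(ν.compProd m)) :=
  H_minus_one_estimates_general m ν hinv lam hlam hP v φ hφ2 hφ0 heq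
end
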